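/- Let G be a finite simple bipartite graph with parts V₁ and V₂, and let w : V → ℝ≥0 be a nonnegative vertex weight function. If the generalized Hall's condition holds for V₁ (i.e., w(S) ≤ w(N(S)) for every S ⊆ V₁), then every vertex cover Π of G satisfies w(Π) ≥ w(V₁). -/

import Mathlib

/-- `P` is a vertex cover of `G`: every edge has at least one endpoint in `P`. -/
def IsVertexCover {V : Type*} (G : SimpleGraph V) (P : Finset V) : Prop :=
  ∀ u v, G.Adj u v → u ∈ P ∨ v ∈ P

/-- The neighborhood `N(S)` of a set of vertices: all vertices adjacent to some vertex of `S`. -/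
def nbhd {V : Type*} [Fintype V] [DecidableEq V] (G : SimpleGraph V) [DecidableRel G.Adj]
    (S : Finset V) : Finset V :=
  S.biUnion (fun v => G.neighborFinset v)

/-!
Given a vertex cover `P`, the vertices `S = V₁ \ P` missed by `P` have all their neighbours
in `P ∩ V₂`, so Hall's condition gives `w(V₁ \ P) ≤ w(N(S)) ≤ w(P ∩ V₂)`; adding `w(V₁ ∩ P)`
yields `w(V₁) ≤ w(P)`.
-/

section

variable {V : Type*} [Fintype V] [DecidableEq V] {G : SimpleGraph V} [DecidableRel G.Adj]

theorem mem_nbhd {S : Finset V} {x : V} : x ∈ nbhd G S ↔ ∃ v ∈ S, G.Adj v x := by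
  simp only [nbhd, Finset.mem_biUnion, SimpleGraph.mem_neighborFinset]

theorem IsVertexCover.nbhd_sdiff_subset {P : Finset V} (hP : IsVertexCover G P) (S : Finset V) :
    nbhd G (S \ P) ⊆ P := by
  intro x hx
  obtain ⟨v, hv, hadj⟩ := mem_nbhd.mp hx
  exact (hP v x hadj).resolve_left (Finset.mem_sdiff.mp hv).2

theorem nbhd_subset_of_bipartite {V₁ V₂ : Finset V} (hdisj : Disjoint V₁ V₂)
    (hbip : ∀ u v, G.Adj u v → (u ∈ V₁ ∧ v ∈ V₂) ∨ (u ∈ V₂ ∧ v ∈ V₁))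
    {S : Finset V} (hS : S ⊆ V₁) : nbhd G S ⊆ V₂ := by
  intro x hx
  obtain ⟨v, hv, hadj⟩ := mem_nbhd.mp hx
  rcases hbip v x hadj with ⟨_, hx₂⟩ | ⟨hv₂, _⟩
  · exact hx₂
  · exact absurd hv₂ (Finset.disjoint_left.mp hdisj (hS hv))

end

theorem GHC_implies_monolog_optimal_general {V : Type*} [Fintype V] [DecidableEq V]
    (G : SimpleGraph V) [DecidableRel G.Adj]
    (V₁ V₂ : Finset V)
    (hdisj : Disjoint V₁ V₂)
    (hbip : ∀ u v, G.Adj u v → (u ∈ V₁ ∧ v ∈ V₂) ∨ (u ∈ V₂ ∧ v ∈ V₁))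
    (w : V → ℝ) (hw : ∀ v, 0 ≤ w v)
    (hGHC : ∀ S ⊆ V₁, S.sum w ≤ (nbhd G S).sum w) :
    ∀ P : Finset V, IsVertexCover G P → V₁.sum w ≤ P.sum w := by
  intro P hP
  have hN : nbhd G (V₁ \ P) ⊆ P ∩ V₂ := Finset.subset_inter (hP.nbhd_sdiff_subset V₁)
    (nbhd_subset_of_bipartite hdisj hbip Finset.sdiff_subset)
  have hsplit : Disjoint (V₁ ∩ P) (P ∩ V₂) :=
    hdisj.mono Finset.inter_subset_left Finset.inter_subset_right
  calc V₁.sum w = (V₁ ∩ P).sum w + (V₁ \ P).sum w := (Finset.sum_inter_add_sum_sdiff V₁ P w).symm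
    _ ≤ (V₁ ∩ P).sum w + (P ∩ V₂).sum w := by
        grw [hGHC _ Finset.sdiff_subset,
          Finset.sum_le_sum_of_subset_of_nonneg hN fun i _ _ => hw i]
    _ = (V₁ ∩ P ∪ P ∩ V₂).sum w := (Finset.sum_union hsplit).symm
    _ ≤ P.sum w := Finset.sum_le_sum_of_subset_of_nonneg
        (Finset.union_subset Finset.inter_subset_right Finset.inter_subset_left) fun i _ _ => hw i

/-- If the generalized Hall's condition holds for `V₁` (i.e.
`w(S) ≤ w(N(S))` for all `S ⊆ V₁`), then every vertex cover `P` satisfies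
`w(V₁) ≤ w(P)`. -/
theorem GHC_implies_monolog_optimal {V : Type*} [Fintype V] [DecidableEq V]
    (G : SimpleGraph V) [DecidableRel G.Adj]
    (V₁ V₂ : Finset V)
    (hdisj : Disjoint V₁ V₂) (hunion : V₁ ∪ V₂ = Finset.univ)
    (hbip : ∀ u v, G.Adj u v → (u ∈ V₁ ∧ v ∈ V₂) ∨ (u ∈ V₂ ∧ v ∈ V₁))
    (w : V → ℝ) (hw : ∀ v, 0 ≤ w v)
    (hGHC : ∀ S ⊆ V₁, S.sum w ≤ (nbhd G S).sum w) :
    ∀ P : Finset V, IsVertexCover G P → V₁.sum w ≤ P.sum w :=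
  GHC_implies_monolog_optimal_general G V₁ V₂ hdisj hbip w hw hGHC
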